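/- For every integer n ≥ 2, the (n+1)-dimensional n-ary Filippov algebra D₃ degenerates to C₁; that is, the structure of C₁ lies in the closure of the GL(V)-orbit of the structure of D₃. -/

import Mathlib

open Function Submodule

/-! Common framework: `V = ℂ^{n+1}`, `n`-ary multiplications as functions
`(Fin n → V) → V`, the action of `GL(V)` on them, orbits, and the
(n+1)-dimensional n-ary Filippov algebras of Kaygorodov–Volkov, each described
as an alternating `n`-linear map by its values on the increasing tuples of
distinct standard basis vectors (0-indexed: `bt n j` is the tuple omitting `e j`). -/

/-- The underlying space `V = ℂ^{n+1}`. -/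
abbrev nV (n : ℕ) : Type := Fin (n + 1) → ℂ

/-- The `j`-th standard basis vector of `V` (0-indexed). -/
def sb (n : ℕ) (j : Fin (n + 1)) : nV n := Pi.single j 1

/-- The increasing `n`-tuple of standard basis vectors omitting `e j`. -/
def bt (n : ℕ) (j : Fin (n + 1)) : Fin n → nV n := fun k => sb n (j.succAbove k)

/-- The action of `GL(V)` (invertible linear maps) on `n`-ary multiplications:
`(g • μ)(x₁, …, xₙ) = g (μ (g⁻¹ x₁, …, g⁻¹ xₙ))`. -/
noncomputable def glAct (n : ℕ) (g : nV n ≃ₗ[ℂ] nV n) (μ : (Fin n → nV n) → nV n) :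
    (Fin n → nV n) → nV n :=
  fun x => g (μ fun i => g.symm (x i))

/-- The `GL(V)`-orbit of an `n`-ary multiplication. -/
def glOrbit (n : ℕ) (μ : (Fin n → nV n) → nV n) : Set ((Fin n → nV n) → nV n) :=
  {ν | ∃ g : nV n ≃ₗ[ℂ] nV n, ν = glAct n g μ}

/-- The algebra `B`: `[e₂, …, e_{n+1}] = e₁` (0-indexed: the tuple omitting `e 0`
maps to `e 0`), all other increasing basis products zero. -/
def IsB (n : ℕ) (μ : AlternatingMap ℂ (nV n) (nV n) (Fin n)) : Prop :=
  μ (bt n 0) = sb n 0 ∧ ∀ j : Fin (n + 1), j ≠ 0 → μ (bt n j) = 0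

/-- The algebra `C₁`: `[e₂, …, e_{n+1}] = e₁`, `[e₁, e₃, …, e_{n+1}] = e₂`. -/
def IsC1 (n : ℕ) (μ : AlternatingMap ℂ (nV n) (nV n) (Fin n)) : Prop :=
  μ (bt n 0) = sb n 0 ∧ μ (bt n 1) = sb n 1 ∧
    ∀ j : Fin (n + 1), j ≠ 0 → j ≠ 1 → μ (bt n j) = 0

/-- The algebra `C₂(α)`: `[e₂, …, e_{n+1}] = α e₁ + e₂`, `[e₁, e₃, …, e_{n+1}] = e₂`. -/
def IsC2 (n : ℕ) (α : ℂ) (μ : AlternatingMap ℂ (nV n) (nV n) (Fin n)) : Prop :=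
  μ (bt n 0) = α • sb n 0 + sb n 1 ∧ μ (bt n 1) = sb n 1 ∧
    ∀ j : Fin (n + 1), j ≠ 0 → j ≠ 1 → μ (bt n j) = 0

/-- The algebra `C₃`: `[e₁, e₃, …, e_{n+1}] = e₁`, `[e₂, e₃, …, e_{n+1}] = e₂`. -/
def IsC3 (n : ℕ) (μ : AlternatingMap ℂ (nV n) (nV n) (Fin n)) : Prop :=
  μ (bt n 1) = sb n 0 ∧ μ (bt n 0) = sb n 1 ∧
    ∀ j : Fin (n + 1), j ≠ 0 → j ≠ 1 → μ (bt n j) = 0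

/-- The algebra `D_r`: `[e₁, …, e_{i-1}, e_{i+1}, …, e_{n+1}] = e_i` for `1 ≤ i ≤ r`
(0-indexed: the tuple omitting `e j` maps to `e j` for `j < r` and to `0` otherwise). -/
def IsD (n r : ℕ) (μ : AlternatingMap ℂ (nV n) (nV n) (Fin n)) : Prop :=
  ∀ j : Fin (n + 1), ((j : ℕ) < r → μ (bt n j) = sb n j) ∧ (r ≤ (j : ℕ) → μ (bt n j) = 0)

/-! Conjugation by `g = diag(d)` multiplies the structure constant of the product omitting `e j`
by `d j ^ 2 / det g`. For `g_t = diag(t⁻¹, t⁻¹, 1, …, 1)` this factor is `1` for the first two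
products and `t ^ 2` for all others, so `g_t • D₃ = C₁ + t² (D₃ - C₁)`, which tends to `C₁`
as `t → 0`. -/

open scoped Topology

theorem Module.Basis.ext_alternating_succAbove {R M N : Type*} [CommRing R] [AddCommGroup M]
    [Module R M] [AddCommGroup N] [Module R N] {n : ℕ} (b : Module.Basis (Fin (n + 1)) R M)
    {f g : M [⋀^Fin n]→ₗ[R] N}
    (h : ∀ j : Fin (n + 1), f (b ∘ j.succAbove) = g (b ∘ j.succAbove)) : f = g := by
  classical
  refine b.ext_alternating fun v hv => ?_
  obtain ⟨j, hj⟩ : ∃ j, j ∉ Set.range v := by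
    by_contra! hsurj
    simpa using Fintype.card_le_of_surjective v hsurj
  choose w hw using fun i => Fin.exists_succAbove_eq (x := v i) (y := j)
    (by rintro rfl; exact hj ⟨i, rfl⟩)
  have hw_bij : w.Bijective :=
    Finite.injective_iff_bijective.mp fun a a' h => hv (by rw [← hw a, ← hw a', h])
  have hv' : (fun i => b (v i)) = (b ∘ j.succAbove) ∘ Equiv.ofBijective w hw_bij := by
    funext i; simp [hw]
  rw [hv', f.map_perm, g.map_perm, h]

section

variable {n : ℕ}

theorem alternatingMap_ext_bt {f g : AlternatingMap ℂ (nV n) (nV n) (Fin n)}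
    (h : ∀ j, f (bt n j) = g (bt n j)) : f = g :=
  (Pi.basisFun ℂ (Fin (n + 1))).ext_alternating_succAbove fun j => by
    rw [show ⇑(Pi.basisFun ℂ (Fin (n + 1))) ∘ j.succAbove = bt n j by funext k; simp [bt, sb]]
    exact h j

noncomputable def diagEquiv (d : Fin (n + 1) → ℂˣ) : nV n ≃ₗ[ℂ] nV n :=
  LinearEquiv.piCongrRight fun i => LinearEquiv.smulOfUnit (d i)

theorem diagEquiv_sb (d : Fin (n + 1) → ℂˣ) (i : Fin (n + 1)) :
    diagEquiv d (sb n i) = (d i : ℂ) • sb n i := by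
  funext k
  by_cases hk : k = i <;> simp [diagEquiv, sb, hk, LinearEquiv.smulOfUnit, Units.smul_def]

theorem diagEquiv_symm_sb (d : Fin (n + 1) → ℂˣ) (i : Fin (n + 1)) :
    (diagEquiv d).symm (sb n i) = (↑(d i)⁻¹ : ℂ) • sb n i := by
  rw [LinearEquiv.symm_apply_eq, map_smul, diagEquiv_sb, smul_smul, Units.inv_mul, one_smul]

theorem glAct_eq_of_apply_bt {g : nV n ≃ₗ[ℂ] nV n}
    {μ ν : AlternatingMap ℂ (nV n) (nV n) (Fin n)}
    (h : ∀ j, glAct n g μ (bt n j) = ν (bt n j)) : glAct n g μ = ν := by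
  change ⇑(g.toLinearMap.compAlternatingMap (μ.compLinearMap g.symm.toLinearMap)) = ν
  exact congrArg _ (alternatingMap_ext_bt h)

theorem glAct_diagEquiv_apply_bt (d : Fin (n + 1) → ℂˣ)
    {μ : AlternatingMap ℂ (nV n) (nV n) (Fin n)} {j : Fin (n + 1)} {c : ℂ}
    (h : μ (bt n j) = c • sb n j) :
    glAct n (diagEquiv d) μ (bt n j) = (↑(d j ^ 2 * (∏ i, d i)⁻¹) * c) • sb n j := by
  have hprod : d j ^ 2 * (∏ i, d i)⁻¹ = d j * ∏ k, (d (j.succAbove k))⁻¹ := by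
    rw [Fin.prod_univ_succAbove _ j, Finset.prod_inv_distrib]
    simp [pow_two, mul_inv_rev, mul_comm, mul_assoc]
  have hsymm : (fun k => (diagEquiv d).symm (bt n j k)) =
      fun k => (↑(d (j.succAbove k))⁻¹ : ℂ) • bt n j k :=
    funext fun k => diagEquiv_symm_sb d _
  rw [glAct, hsymm, μ.map_smul_univ, h, smul_smul, map_smul, diagEquiv_sb, smul_smul, hprod]
  push_cast
  ring_nf

theorem IsD.apply_bt {r : ℕ} {μ : AlternatingMap ℂ (nV n) (nV n) (Fin n)} (hμ : IsD n r μ)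
    (j : Fin (n + 1)) : μ (bt n j) = (if (j : ℕ) < r then 1 else 0 : ℂ) • sb n j := by
  split_ifs with hj
  · rw [one_smul, (hμ j).1 hj]
  · rw [zero_smul, (hμ j).2 (not_lt.mp hj)]

theorem IsC1.apply_bt (hn : 1 ≤ n) {ν : AlternatingMap ℂ (nV n) (nV n) (Fin n)}
    (hν : IsC1 n ν) (j : Fin (n + 1)) :
    ν (bt n j) = (if (j : ℕ) < 2 then 1 else 0 : ℂ) • sb n j := by
  have h1 : ((1 : Fin (n + 1)) : ℕ) = 1 := by
    rw [Fin.val_one']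
    exact Nat.mod_eq_of_lt (by omega)
  split_ifs with hj
  · obtain rfl | rfl : j = 0 ∨ j = 1 := by simp only [Fin.ext_iff, Fin.val_zero, h1]; omega
    exacts [by rw [one_smul, hν.1], by rw [one_smul, hν.2.1]]
  · rw [zero_smul, hν.2.2 j (by rintro rfl; simp at hj) (by rintro rfl; rw [h1] at hj; omega)]

def scaleFirstTwo (n : ℕ) (t : ℂˣ) : Fin (n + 1) → ℂˣ := fun i => if (i : ℕ) < 2 then t⁻¹ else 1

theorem prod_scaleFirstTwo (hn : 1 ≤ n) (t : ℂˣ) : ∏ i, scaleFirstTwo n t i = t⁻¹ ^ 2 := by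
  obtain ⟨m, rfl⟩ : ∃ m, n = m + 1 := ⟨n - 1, by omega⟩
  simp [scaleFirstTwo, Fin.prod_univ_succ, pow_two]

theorem glAct_scaleFirstTwo_of_isD_three (hn : 1 ≤ n)
    {μ ν : AlternatingMap ℂ (nV n) (nV n) (Fin n)} (hμ : IsD n 3 μ) (hν : IsC1 n ν) (t : ℂˣ) :
    glAct n (diagEquiv (scaleFirstTwo n t)) μ = ⇑(ν + (t : ℂ) ^ 2 • (μ - ν)) := by
  refine glAct_eq_of_apply_bt fun j => ?_
  rw [glAct_diagEquiv_apply_bt _ (hμ.apply_bt j), AlternatingMap.add_apply,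
    AlternatingMap.smul_apply, AlternatingMap.sub_apply, hμ.apply_bt, hν.apply_bt hn, ← sub_smul,
    smul_smul, ← add_smul, prod_scaleFirstTwo hn]
  congr 1
  simp only [scaleFirstTwo]
  split_ifs <;> push_cast <;> first | omega | (field_simp; ring_nf)

end

/-- For every integer `n ≥ 2`, the algebra `D₃` degenerates to `C₁`. -/
theorem D3_degenerates_to_C1 (n : ℕ) (hn : 2 ≤ n)
    (μ ν : AlternatingMap ℂ (nV n) (nV n) (Fin n)) (hμ : IsD n 3 μ) (hν : IsC1 n ν) :
    ⇑ν ∈ closure (glOrbit n ⇑μ) := by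
  have hcurve : ∀ t : ℂ, t ≠ 0 → ⇑(ν + t ^ 2 • (μ - ν)) ∈ glOrbit n ⇑μ := fun t ht =>
    ⟨_, (glAct_scaleFirstTwo_of_isD_three (by omega) hμ hν (Units.mk0 t ht)).symm⟩
  have hcont : Continuous fun t : ℂ => ⇑(ν + t ^ 2 • (μ - ν)) := by
    have hpointwise : (fun t : ℂ => ⇑(ν + t ^ 2 • (μ - ν))) =
        fun t x => ν x + t ^ 2 • (μ x - ν x) := by
      funext t x
      simp
    rw [hpointwise]
    fun_prop
  refine mem_closure_of_tendsto (f := fun t : ℂ => ⇑(ν + t ^ 2 • (μ - ν))) (b := 𝓝[≠] 0) ?_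
    (eventually_nhdsWithin_of_forall hcurve)
  simpa using (hcont.tendsto 0).mono_left nhdsWithin_le_nhds
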